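/- The fixed points of the fractional flow map on the saturation triangle are exactly the three vertices, the three edge points B, D, E, and the umbilic point: for u ∈ Δ, F(u) = u holds if and only if u ∈ {G, W, O, B, D, E, U}, where G = (0,1), W = (1,0), O = (0,0), B = (μ_w/(μ_w+μ_g), μ_g/(μ_w+μ_g)), D = (μ_w/(μ_w+μ_o), 0), E = (0, μ_g/(μ_g+μ_o)), and U = (μ_w/μ_tot, μ_g/μ_tot) with μ_tot = μ_w + μ_g + μ_o. -/

import Mathlib

open Matrix Polynomial

noncomputable section ThreePhaseFlow

/-- Oil saturation `s_o = 1 - s_w - s_g`. -/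
def so (u : ℝ × ℝ) : ℝ := 1 - u.1 - u.2

/-- The denominator `D(u) = s_w^2/μ_w + s_g^2/μ_g + s_o^2/μ_o`. -/
def Dfun (μw μg μo : ℝ) (u : ℝ × ℝ) : ℝ :=
  u.1 ^ 2 / μw + u.2 ^ 2 / μg + so u ^ 2 / μo

/-- Water fractional flow `f_w`. -/
def fw (μw μg μo : ℝ) (u : ℝ × ℝ) : ℝ := u.1 ^ 2 / (μw * Dfun μw μg μo u)

/-- Gas fractional flow `f_g`. -/
def fg (μw μg μo : ℝ) (u : ℝ × ℝ) : ℝ := u.2 ^ 2 / (μg * Dfun μw μg μo u)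

/-- Oil fractional flow `f_o`. -/
def fo (μw μg μo : ℝ) (u : ℝ × ℝ) : ℝ := so u ^ 2 / (μo * Dfun μw μg μo u)

/-- The flux map `F(u) = (f_w(u), f_g(u))`. -/
def flux (μw μg μo : ℝ) (u : ℝ × ℝ) : ℝ × ℝ :=
  (fw μw μg μo u, fg μw μg μo u)

/-- The saturation triangle `Δ`. -/
def satTriangle : Set (ℝ × ℝ) := {u | 0 ≤ u.1 ∧ 0 ≤ u.2 ∧ u.1 + u.2 ≤ 1}

/-- The Jacobian matrix `J(u)` of the flux map at `u`. -/
def jac (μw μg μo : ℝ) (u : ℝ × ℝ) : Matrix (Fin 2) (Fin 2) ℝ :=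
  !![fderiv ℝ (fw μw μg μo) u (1, 0), fderiv ℝ (fw μw μg μo) u (0, 1);
     fderiv ℝ (fg μw μg μo) u (1, 0), fderiv ℝ (fg μw μg μo) u (0, 1)]

/-- The denominator is positive everywhere (since `s_w + s_g + s_o = 1`). -/
lemma Dfun_pos (μw μg μo : ℝ) (hw : 0 < μw) (hg : 0 < μg) (ho : 0 < μo) (u : ℝ × ℝ) :
    0 < Dfun μw μg μo u := by
  simp only [Dfun, so]
  rcases eq_or_ne u.1 0 with h1 | h1
  · rcases eq_or_ne u.2 0 with h2 | h2
    · rw [h1, h2]; norm_num; positivity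
    · have h2' : 0 < u.2 ^ 2 := lt_of_le_of_ne (sq_nonneg _) (Ne.symm (pow_ne_zero 2 h2))
      have a1 : 0 ≤ u.1 ^ 2 / μw := by positivity
      have a3 : 0 ≤ (1 - u.1 - u.2) ^ 2 / μo := by positivity
      have a2 : 0 < u.2 ^ 2 / μg := div_pos h2' hg
      linarith
  · have h1' : 0 < u.1 ^ 2 := lt_of_le_of_ne (sq_nonneg _) (Ne.symm (pow_ne_zero 2 h1))
    have a1 : 0 < u.1 ^ 2 / μw := div_pos h1' hw
    have a2 : 0 ≤ u.2 ^ 2 / μg := by positivity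
    have a3 : 0 ≤ (1 - u.1 - u.2) ^ 2 / μo := by positivity
    linarith

/-- the fixed points of the flux map on the saturation triangle are
exactly `G`, `W`, `O`, `B`, `D`, `E` and the umbilic point `U`. -/
theorem flux_fixed_points (μw μg μo : ℝ) (hw : 0 < μw) (hg : 0 < μg) (ho : 0 < μo) :
    ∀ u ∈ satTriangle,
      (flux μw μg μo u = u ↔
        u = ((0 : ℝ), (1 : ℝ)) ∨ u = ((1 : ℝ), (0 : ℝ)) ∨ u = ((0 : ℝ), (0 : ℝ)) ∨
        u = (μw / (μw + μg), μg / (μw + μg)) ∨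
        u = (μw / (μw + μo), (0 : ℝ)) ∨
        u = ((0 : ℝ), μg / (μg + μo)) ∨
        u = (μw / (μw + μg + μo), μg / (μw + μg + μo))) := by
  have hDpos := Dfun_pos μw μg μo hw hg ho
  -- value of μw*μg*μo*D as a polynomial
  have hQ : ∀ u : ℝ × ℝ, μw * μg * μo * Dfun μw μg μo u =
      u.1 ^ 2 * (μg * μo) + u.2 ^ 2 * (μw * μo) + (1 - u.1 - u.2) ^ 2 * (μw * μg) := by
    intro u; simp only [Dfun, so]; field_simp
  rintro ⟨x, y⟩ -
  have hD := hDpos (x, y)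
  have hQ' := hQ (x, y)
  simp only at hQ'
  constructor
  · intro h
    simp only [flux, Prod.mk.injEq] at h
    obtain ⟨h1, h2⟩ := h
    have h1' : x ^ 2 = x * (μw * Dfun μw μg μo (x, y)) := by
      rw [fw, div_eq_iff (mul_pos hw hD).ne'] at h1; exact h1
    have h2' : y ^ 2 = y * (μg * Dfun μw μg μo (x, y)) := by
      rw [fg, div_eq_iff (mul_pos hg hD).ne'] at h2; exact h2
    have fx : x * (x * (μg * μo) -
        (x ^ 2 * (μg * μo) + y ^ 2 * (μw * μo) + (1 - x - y) ^ 2 * (μw * μg))) = 0 := by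
      linear_combination (μg * μo) * h1' + x * hQ'
    have fy : y * (y * (μw * μo) -
        (x ^ 2 * (μg * μo) + y ^ 2 * (μw * μo) + (1 - x - y) ^ 2 * (μw * μg))) = 0 := by
      linear_combination (μw * μo) * h2' + y * hQ'
    rcases mul_eq_zero.mp fx with hx0 | hx1
    · rcases mul_eq_zero.mp fy with hy0 | hy1
      · -- point O
        exact Or.inr (Or.inr (Or.inl (by rw [hx0, hy0])))
      · -- x = 0 edge: G or E
        subst hx0
        have fac : μw * ((1 - y) * (y * μo - (1 - y) * μg)) = 0 := by
          linear_combination hy1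
        rcases mul_eq_zero.mp fac with c | c
        · exact absurd c hw.ne'
        rcases mul_eq_zero.mp c with c1 | c2
        · -- G
          refine Or.inl ?_
          have : y = 1 := by linarith
          rw [this]
        · -- E
          refine Or.inr (Or.inr (Or.inr (Or.inr (Or.inr (Or.inl ?_)))))
          have hy : y = μg / (μg + μo) := by
            rw [eq_div_iff (by positivity)]
            linear_combination c2
          rw [hy]
    · rcases mul_eq_zero.mp fy with hy0 | hy1
      · -- y = 0 edge: W or D
        subst hy0
        have fac : μg * ((1 - x) * (x * μo - (1 - x) * μw)) = 0 := by
          linear_combination hx1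
        rcases mul_eq_zero.mp fac with c | c
        · exact absurd c hg.ne'
        rcases mul_eq_zero.mp c with c1 | c2
        · -- W
          refine Or.inr (Or.inl ?_)
          have : x = 1 := by linarith
          rw [this]
        · -- D
          refine Or.inr (Or.inr (Or.inr (Or.inr (Or.inl ?_))))
          have hx : x = μw / (μw + μo) := by
            rw [eq_div_iff (by positivity)]
            linear_combination c2
          rw [hx]
      · -- interior: B or U
        have fac : (1 - x - y) *
            ((x ^ 2 * (μg * μo) + y ^ 2 * (μw * μo) + (1 - x - y) ^ 2 * (μw * μg))
              - (1 - x - y) * (μw * μg)) = 0 := by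
          linear_combination x * hx1 + y * hy1
        rcases mul_eq_zero.mp fac with c1 | c2
        · -- B
          refine Or.inr (Or.inr (Or.inr (Or.inl ?_)))
          have hxy : x * μg = y * μw := by
            apply mul_right_cancel₀ ho.ne'
            linear_combination hx1 - hy1
          have hx : x = μw / (μw + μg) := by
            rw [eq_div_iff (by positivity)]
            linear_combination hxy - μw * c1
          have hy : y = μg / (μw + μg) := by
            rw [eq_div_iff (by positivity)]
            linear_combination - hxy - μg * c1
          rw [hx, hy]
        · -- U
          refine Or.inr (Or.inr (Or.inr (Or.inr (Or.inr (Or.inr ?_)))))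
          have ha : x * μo = (1 - x - y) * μw := by
            apply mul_right_cancel₀ hg.ne'
            linear_combination hx1 + c2
          have hb : y * μo = (1 - x - y) * μg := by
            apply mul_right_cancel₀ hw.ne'
            linear_combination hy1 + c2
          have hc : x * μg = y * μw := by
            apply mul_right_cancel₀ ho.ne'
            linear_combination μg * ha - μw * hb
          have hx : x = μw / (μw + μg + μo) := by
            rw [eq_div_iff (by positivity)]
            linear_combination ha + hc
          have hy : y = μg / (μw + μg + μo) := by
            rw [eq_div_iff (by positivity)]
            linear_combination hb - hc
          rw [hx, hy]
  · intro h
    have comp : ∀ a b : ℝ, a ^ 2 = a * (μw * Dfun μw μg μo (a, b)) →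
        b ^ 2 = b * (μg * Dfun μw μg μo (a, b)) → flux μw μg μo (a, b) = (a, b) := by
      intro a b e1 e2
      have hD' := hDpos (a, b)
      simp only [flux, Prod.mk.injEq, fw, fg]
      exact ⟨by rw [div_eq_iff (mul_pos hw hD').ne']; exact e1,
             by rw [div_eq_iff (mul_pos hg hD').ne']; exact e2⟩
    have hwg : (μw + μg) ≠ 0 := by positivity
    have hwo : (μw + μo) ≠ 0 := by positivity
    have hgo : (μg + μo) ≠ 0 := by positivity
    have hT : (μw + μg + μo) ≠ 0 := by positivity
    rcases h with h | h | h | h | h | h | h <;> rw [h] <;> apply comp <;>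
      simp only [Dfun, so] <;> field_simp <;> ring
  

end ThreePhaseFlow
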